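/- Let x₁, y₁, x₂, y₂ ∈ F^× with x₁y₁ = x₂y₂, x₁ ≠ y₁, x₁ ≠ −y₁, x₂ ≠ y₂ and x₂ ≠ −y₂. The centralizer in SO₄(F) of the element [(diag(x₁, y₁), diag(x₂, y₂))] is a commutative group of cardinality (q−1)². -/

import Mathlib

set_option linter.unusedSectionVars false

open Matrix

variable (F : Type*) [Field F] [Fintype F] [DecidableEq F]

/-- The group `GL_{2,2}(F)` of pairs of invertible 2×2 matrices with equal determinant. -/
def GL22 : Subgroup (GL (Fin 2) F × GL (Fin 2) F) where
  carrier := {p | Matrix.GeneralLinearGroup.det p.1 = Matrix.GeneralLinearGroup.det p.2}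
  one_mem' := by simp
  mul_mem' := by
    intro a b ha hb
    simp only [Set.mem_setOf_eq, Prod.fst_mul, Prod.snd_mul, _root_.map_mul] at *
    rw [ha, hb]
  inv_mem' := by
    intro a ha
    simp only [Set.mem_setOf_eq, Prod.fst_inv, Prod.snd_inv, map_inv] at *
    rw [ha]

/-- The scalar matrix `aI₂` as an element of `GL₂(F)`. -/
noncomputable def sc (a : Fˣ) : GL (Fin 2) F := Units.map (Matrix.scalar (Fin 2)).toMonoidHom a

lemma sc_pair_mem (a : Fˣ) : (sc F a, sc F a) ∈ GL22 F := rfl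

/-- The central embedding `a ↦ (aI₂, aI₂)`. -/
noncomputable def scalarHom : Fˣ →* GL22 F where
  toFun a := ⟨(sc F a, sc F a), sc_pair_mem F a⟩
  map_one' := by
    apply Subtype.ext
    apply Prod.ext <;> simp [sc]
  map_mul' a b := by
    apply Subtype.ext
    apply Prod.ext <;> simp [sc]

instance scalarHom_range_normal : (scalarHom F).range.Normal := by
  constructor
  rintro n ⟨a, rfl⟩ g
  refine ⟨a, ?_⟩
  have hc : g * scalarHom F a = scalarHom F a * g := by
    apply Subtype.ext
    apply Prod.ext <;>
    · apply Units.ext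
      exact (Matrix.scalar_commute (a : F) (fun r => mul_comm _ _) _).symm
  rw [hc, mul_assoc, mul_inv_cancel, mul_one]

/-- `SO₄(F)` as the quotient of `GL_{2,2}(F)` by the diagonally embedded scalars. -/
abbrev SO4 := GL22 F ⧸ (scalarHom F).range

/-- The class `[(g,h)]` of a pair in `SO₄(F)`. -/
noncomputable def cls : GL22 F → SO4 F := QuotientGroup.mk


/-! ### Auxiliary material -/

lemma diag_mul_inv (a b : Fˣ) :
    Matrix.diagonal ![(a:F),b] * Matrix.diagonal ![((a⁻¹:Fˣ):F),((b⁻¹:Fˣ):F)] = 1 := by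
  ext i j
  fin_cases i <;> fin_cases j <;> simp [Matrix.mul_apply, Fin.sum_univ_two, Matrix.one_apply]

lemma diag_inv_mul (a b : Fˣ) :
    Matrix.diagonal ![((a⁻¹:Fˣ):F),((b⁻¹:Fˣ):F)] * Matrix.diagonal ![(a:F),b] = 1 := by
  ext i j
  fin_cases i <;> fin_cases j <;> simp [Matrix.mul_apply, Fin.sum_univ_two, Matrix.one_apply]

/-- An invertible diagonal matrix as an element of `GL₂`. -/
noncomputable def dg (a b : Fˣ) : GL (Fin 2) F :=
  ⟨Matrix.diagonal ![(a:F),b], Matrix.diagonal ![((a⁻¹:Fˣ):F),((b⁻¹:Fˣ):F)],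
    diag_mul_inv F a b, diag_inv_mul F a b⟩

@[simp] lemma dg_val (a b : Fˣ) : ((dg F a b : GL (Fin 2) F) : Matrix (Fin 2) (Fin 2) F)
    = Matrix.diagonal ![(a:F),b] := rfl

lemma dg_det (a b : Fˣ) : Matrix.GeneralLinearGroup.det (dg F a b) = a * b := by
  apply Units.ext
  rw [Matrix.GeneralLinearGroup.val_det_apply]
  simp [Matrix.det_fin_two]

lemma dg_mul (a b c d : Fˣ) : dg F a b * dg F c d = dg F (a*c) (b*d) := by
  apply Units.ext
  show (Matrix.diagonal ![(a:F),b] * Matrix.diagonal ![(c:F),d]) = _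
  ext i j
  fin_cases i <;> fin_cases j <;> simp [Matrix.mul_apply, Fin.sum_univ_two]

lemma sc_eq_dg (a : Fˣ) : sc F a = dg F a a := by
  apply Units.ext
  show Matrix.scalar (Fin 2) (a : F) = Matrix.diagonal ![(a:F),a]
  ext i j
  fin_cases i <;> fin_cases j <;> simp [Matrix.one_apply]

lemma diagonal_comm' (d e : Fin 2 → F) :
    Matrix.diagonal d * Matrix.diagonal e = Matrix.diagonal e * Matrix.diagonal d := by
  ext i j
  fin_cases i <;> fin_cases j <;>
    simp [Matrix.mul_apply, Fin.sum_univ_two, Matrix.diagonal, mul_comm]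

/-- The torus map into `GL22`. -/
noncomputable def phi : (Fˣ × Fˣ × Fˣ) →* GL22 F :=
  MonoidHom.mk' (fun v => ⟨(dg F v.1 v.2.1, dg F v.2.2 (v.1 * v.2.1 * v.2.2⁻¹)), by
      show Matrix.GeneralLinearGroup.det _ = Matrix.GeneralLinearGroup.det _
      rw [dg_det, dg_det, mul_comm v.2.2, inv_mul_cancel_right]⟩)
    (by
      intro v w
      apply Subtype.ext
      apply Prod.ext
      · show dg F (v.1 * w.1) _ = dg F v.1 _ * dg F w.1 _
        rw [dg_mul]
        simp only [Prod.fst_mul, Prod.snd_mul]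
      · show dg F (v.2.2 * w.2.2) _ = dg F v.2.2 _ * dg F w.2.2 _
        rw [dg_mul]
        simp only [Prod.fst_mul, Prod.snd_mul]
        congr 1
        simp [mul_inv, mul_comm, mul_left_comm, mul_assoc])

/-- The torus map into `SO4`. -/
noncomputable def Phi : (Fˣ × Fˣ × Fˣ) →* SO4 F :=
  (QuotientGroup.mk' (scalarHom F).range).comp (phi F)

/-- The diagonal embedding of scalars into the torus. -/
noncomputable def delta : Fˣ →* (Fˣ × Fˣ × Fˣ) :=
  MonoidHom.mk' (fun a => (a, a, a)) (by intro a b; rfl)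

lemma phi_delta (a : Fˣ) : phi F (delta F a) = scalarHom F a := by
  apply Subtype.ext
  apply Prod.ext
  · show dg F a a = sc F a
    rw [sc_eq_dg]
  · show dg F a (a * a * a⁻¹) = sc F a
    rw [sc_eq_dg]
    congr 1
    rw [mul_inv_cancel_right]

lemma ker_Phi : (Phi F).ker = (delta F).range := by
  ext v
  constructor
  · intro hv
    have : phi F v ∈ (scalarHom F).range := by
      rwa [Phi, MonoidHom.mem_ker, MonoidHom.comp_apply, QuotientGroup.mk'_apply,
        QuotientGroup.eq_one_iff] at hv
    obtain ⟨u, hu⟩ := this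
    have h1 : (sc F u : Matrix (Fin 2) (Fin 2) F) = (dg F v.1 v.2.1 : GL (Fin 2) F) := by
      have := congrArg (fun x => ((x : GL22 F).val.1 : Matrix (Fin 2) (Fin 2) F)) hu
      exact this
    have h2 : (sc F u : Matrix (Fin 2) (Fin 2) F)
        = (dg F v.2.2 (v.1 * v.2.1 * v.2.2⁻¹) : GL (Fin 2) F) := by
      have := congrArg (fun x => ((x : GL22 F).val.2 : Matrix (Fin 2) (Fin 2) F)) hu
      exact this
    rw [sc_eq_dg] at h1 h2
    simp only [dg_val] at h1 h2
    have e00 : (u : F) = v.1 := by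
      have := congrFun (congrFun h1 0) 0; simpa using this
    have e11 : (u : F) = v.2.1 := by
      have := congrFun (congrFun h1 1) 1; simpa using this
    have e22 : (u : F) = v.2.2 := by
      have := congrFun (congrFun h2 0) 0; simpa using this
    refine ⟨u, ?_⟩
    have : v = (u, u, u) := by
      ext
      · exact e00.symm
      · exact e11.symm
      · exact e22.symm
    simp [delta, this]
  · rintro ⟨a, rfl⟩
    rw [Phi, MonoidHom.mem_ker, MonoidHom.comp_apply, QuotientGroup.mk'_apply,
      QuotientGroup.eq_one_iff, phi_delta]
    exact ⟨a, rfl⟩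

lemma comm_diag {x y : F} (hxy : x ≠ y) {M : Matrix (Fin 2) (Fin 2) F}
    (h : M * Matrix.diagonal ![x,y] = Matrix.diagonal ![x,y] * M) :
    M 0 1 = 0 ∧ M 1 0 = 0 := by
  have h01 := congrFun (congrFun h 0) 1
  have h10 := congrFun (congrFun h 1) 0
  simp [Matrix.mul_apply, Fin.sum_univ_two, Matrix.diagonal] at h01 h10
  constructor
  · by_contra hne
    exact hxy ((mul_left_cancel₀ hne (by linear_combination h01)).symm)
  · by_contra hne
    exact hxy (mul_left_cancel₀ hne (by linear_combination h10))


/-- For regular split semisimple pairs, the centralizer in `SO₄(F)` of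
`[(diag(x₁,y₁), diag(x₂,y₂))]` is a commutative group of cardinality `(q-1)²`. -/
theorem centralizer_c3c3 (hq : Odd (Fintype.card F)) (x₁ y₁ x₂ y₂ : F)
    (hx₁ : x₁ ≠ 0) (hy₁ : y₁ ≠ 0) (hx₂ : x₂ ≠ 0) (hy₂ : y₂ ≠ 0)
    (hdet : x₁ * y₁ = x₂ * y₂)
    (h₁ : x₁ ≠ y₁) (h₁' : x₁ ≠ -y₁) (h₂ : x₂ ≠ y₂) (h₂' : x₂ ≠ -y₂)
    (p : GL22 F)
    (hp1 : (p.val.1 : Matrix (Fin 2) (Fin 2) F) = Matrix.diagonal ![x₁, y₁])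
    (hp2 : (p.val.2 : Matrix (Fin 2) (Fin 2) F) = Matrix.diagonal ![x₂, y₂]) :
    Nat.card ↥(Subgroup.centralizer {cls F p}) = (Fintype.card F - 1) ^ 2 ∧
    ∀ a b : SO4 F, a ∈ Subgroup.centralizer {cls F p} →
      b ∈ Subgroup.centralizer {cls F p} → a * b = b * a := by
  -- the range of Phi equals the centralizer
  have hrange : (Phi F).range = Subgroup.centralizer {cls F p} := by
    ext z
    rw [Subgroup.mem_centralizer_iff]
    constructor
    · rintro ⟨v, rfl⟩ g hg
      rw [Set.mem_singleton_iff] at hg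
      subst hg
      show cls F p * Phi F v = Phi F v * cls F p
      have : p * phi F v = phi F v * p := by
        apply Subtype.ext
        apply Prod.ext
        · apply Units.ext
          show (p.val.1 : Matrix (Fin 2) (Fin 2) F) * (dg F v.1 v.2.1 : GL (Fin 2) F)
            = (dg F v.1 v.2.1 : GL (Fin 2) F) * (p.val.1 : Matrix (Fin 2) (Fin 2) F)
          rw [hp1, dg_val]
          exact diagonal_comm' F _ _
        · apply Units.ext
          show (p.val.2 : Matrix (Fin 2) (Fin 2) F) * (dg F v.2.2 _ : GL (Fin 2) F)
            = (dg F v.2.2 _ : GL (Fin 2) F) * (p.val.2 : Matrix (Fin 2) (Fin 2) F)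
          rw [hp2, dg_val]
          exact diagonal_comm' F _ _
      show QuotientGroup.mk (p * phi F v) = QuotientGroup.mk (phi F v * p)
      rw [this]
    · intro hz
      obtain ⟨a, rfl⟩ := QuotientGroup.mk_surjective z
      have hcomm := hz (cls F p) rfl
      have hmem : (p * a)⁻¹ * (a * p) ∈ (scalarHom F).range := by
        rw [← QuotientGroup.eq]
        exact hcomm
      obtain ⟨u, hu⟩ := hmem
      have key : p * a * scalarHom F u = a * p := by
        rw [hu]
        group
      -- first component, at GL level
      have k1 : p.val.1 * a.val.1 * sc F u = a.val.1 * p.val.1 := by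
        have := congrArg (fun x => (x : GL22 F).val.1) key
        exact this
      have k2 : p.val.2 * a.val.2 * sc F u = a.val.2 * p.val.2 := by
        have := congrArg (fun x => (x : GL22 F).val.2) key
        exact this
      -- conjugation form
      have conj1 : a.val.1 * p.val.1 * (a.val.1)⁻¹ = p.val.1 * sc F u := by
        have hc : sc F u * (a.val.1)⁻¹ = (a.val.1)⁻¹ * sc F u := by
          apply Units.ext
          exact (Matrix.scalar_commute (u : F) (fun r => mul_comm _ _) _)
        calc a.val.1 * p.val.1 * (a.val.1)⁻¹
            = p.val.1 * a.val.1 * sc F u * (a.val.1)⁻¹ := by rw [k1]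
          _ = p.val.1 * sc F u * (a.val.1 * (a.val.1)⁻¹) := by
              rw [mul_assoc (p.val.1 * a.val.1), hc]
              group
          _ = p.val.1 * sc F u := by rw [mul_inv_cancel, mul_one]
      -- take traces to get u = 1
      have hu1 : u = 1 := by
        have htr := congrArg (fun m : GL (Fin 2) F => Matrix.trace (m : Matrix (Fin 2) (Fin 2) F)) conj1
        simp only [Units.val_mul] at htr
        have hBA : ((a.val.1)⁻¹ : GL (Fin 2) F).val * (a.val.1).val = 1 := by
          have := congrArg Units.val (inv_mul_cancel (a.val.1))
          simp only [Units.val_mul, Units.val_one] at this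
          exact this
        rw [Matrix.trace_mul_comm ((a.val.1).val * (p.val.1).val)] at htr
        rw [← mul_assoc, hBA, one_mul] at htr
        have hscv : (sc F u : Matrix (Fin 2) (Fin 2) F) = (u : F) • (1 : Matrix (Fin 2) (Fin 2) F) := by
          show Matrix.scalar (Fin 2) (u : F) = _
          ext i j
          fin_cases i <;> fin_cases j <;>
            simp [Matrix.scalar, Matrix.diagonal, Matrix.one_apply, Matrix.algebraMap_matrix_apply]
        rw [hscv, hp1] at htr
        have : Matrix.trace (Matrix.diagonal ![x₁, y₁]) = x₁ + y₁ := by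
          simp [Matrix.trace_diagonal, Fin.sum_univ_two]
        rw [Matrix.mul_smul, mul_one, Matrix.trace_smul, this, smul_eq_mul] at htr
        have hne : x₁ + y₁ ≠ 0 := fun h0 => h₁' (eq_neg_of_add_eq_zero_left h0)
        have huF : (u : F) = 1 := by
          have h' : (u : F) * (x₁ + y₁) = 1 * (x₁ + y₁) := by rw [one_mul, ← htr]
          exact mul_right_cancel₀ hne h'
        exact Units.ext huF
      subst hu1
      rw [_root_.map_one, mul_one] at key
      -- now a commutes with p componentwise
      have c1 : (a.val.1 : Matrix (Fin 2) (Fin 2) F) * Matrix.diagonal ![x₁, y₁]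
          = Matrix.diagonal ![x₁, y₁] * (a.val.1 : Matrix (Fin 2) (Fin 2) F) := by
        have := congrArg (fun x => ((x : GL22 F).val.1 : Matrix (Fin 2) (Fin 2) F)) key
        simp only [Subgroup.coe_mul, Prod.fst_mul, Units.val_mul] at this
        rw [← hp1]
        exact this.symm
      have c2 : (a.val.2 : Matrix (Fin 2) (Fin 2) F) * Matrix.diagonal ![x₂, y₂]
          = Matrix.diagonal ![x₂, y₂] * (a.val.2 : Matrix (Fin 2) (Fin 2) F) := by
        have := congrArg (fun x => ((x : GL22 F).val.2 : Matrix (Fin 2) (Fin 2) F)) key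
        simp only [Subgroup.coe_mul, Prod.snd_mul, Units.val_mul] at this
        rw [← hp2]
        exact this.symm
      obtain ⟨hA01, hA10⟩ := comm_diag F h₁ c1
      obtain ⟨hB01, hB10⟩ := comm_diag F h₂ c2
      set A := (a.val.1 : Matrix (Fin 2) (Fin 2) F) with hA
      set B := (a.val.2 : Matrix (Fin 2) (Fin 2) F) with hB
      have hAdiag : A = Matrix.diagonal ![A 0 0, A 1 1] := by
        ext i j
        fin_cases i <;> fin_cases j <;> simp [Matrix.diagonal, hA01, hA10]
      have hBdiag : B = Matrix.diagonal ![B 0 0, B 1 1] := by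
        ext i j
        fin_cases i <;> fin_cases j <;> simp [Matrix.diagonal, hB01, hB10]
      have hdetA : A.det = A 0 0 * A 1 1 := by
        rw [Matrix.det_fin_two, hA01, hA10]
        ring
      have hdetB : B.det = B 0 0 * B 1 1 := by
        rw [Matrix.det_fin_two, hB01, hB10]
        ring
      have hdetAne : A.det ≠ 0 := by
        rw [← Matrix.GeneralLinearGroup.val_det_apply]
        exact Units.ne_zero _
      have hdetBne : B.det ≠ 0 := by
        rw [← Matrix.GeneralLinearGroup.val_det_apply]
        exact Units.ne_zero _
      have hA00 : A 0 0 ≠ 0 := fun h => hdetAne (by rw [hdetA, h, zero_mul])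
      have hA11 : A 1 1 ≠ 0 := fun h => hdetAne (by rw [hdetA, h, mul_zero])
      have hB00 : B 0 0 ≠ 0 := fun h => hdetBne (by rw [hdetB, h, zero_mul])
      have hdetEq : A.det = B.det := by
        have := a.property
        have := congrArg Units.val this
        rw [Matrix.GeneralLinearGroup.val_det_apply, Matrix.GeneralLinearGroup.val_det_apply] at this
        exact this
      refine ⟨(Units.mk0 (A 0 0) hA00, Units.mk0 (A 1 1) hA11, Units.mk0 (B 0 0) hB00), ?_⟩
      show QuotientGroup.mk (phi F _) = QuotientGroup.mk a
      congr 1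
      apply Subtype.ext
      apply Prod.ext
      · apply Units.ext
        show Matrix.diagonal ![A 0 0, A 1 1] = A
        exact hAdiag.symm
      · apply Units.ext
        have hB11 : ((Units.mk0 (A 0 0) hA00 * Units.mk0 (A 1 1) hA11
            * (Units.mk0 (B 0 0) hB00)⁻¹ : Fˣ) : F) = B 1 1 := by
          rw [hdetA, hdetB] at hdetEq
          push_cast [Units.val_mk0]
          field_simp
          linear_combination hdetEq
        have hvec : ![((Units.mk0 (B 0 0) hB00 : Fˣ) : F),
            ((Units.mk0 (A 0 0) hA00 * Units.mk0 (A 1 1) hA11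
            * (Units.mk0 (B 0 0) hB00)⁻¹ : Fˣ) : F)] = ![B 0 0, B 1 1] := by
          funext i
          fin_cases i
          · rfl
          · exact hB11
        show Matrix.diagonal _ = B
        exact (congrArg Matrix.diagonal hvec).trans hBdiag.symm
  constructor
  · -- cardinality
    rw [← hrange]
    have e1 : Nat.card (Phi F).range = Nat.card ((Fˣ × Fˣ × Fˣ) ⧸ (Phi F).ker) :=
      Nat.card_congr (QuotientGroup.quotientKerEquivRange (Phi F)).toEquiv.symm
    have e2 : Nat.card (Fˣ × Fˣ × Fˣ)
        = Nat.card ((Fˣ × Fˣ × Fˣ) ⧸ (Phi F).ker) * Nat.card (Phi F).ker :=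
      Subgroup.card_eq_card_quotient_mul_card_subgroup (Phi F).ker
    have hker : Nat.card (Phi F).ker = Fintype.card F - 1 := by
      rw [ker_Phi]
      have hinj : Function.Injective (delta F) := by
        intro a b h
        have := congrArg Prod.fst h
        exact Units.ext (congrArg Units.val this)
      have : Nat.card (delta F).range = Nat.card Fˣ :=
        Nat.card_congr (Equiv.ofInjective _ hinj).symm
      rw [this, Nat.card_eq_fintype_card, Fintype.card_units]
    have hdom : Nat.card (Fˣ × Fˣ × Fˣ) = (Fintype.card F - 1) ^ 3 := by
      rw [Nat.card_prod, Nat.card_prod, Nat.card_eq_fintype_card, Fintype.card_units]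
      ring
    have hpos : 0 < Fintype.card F - 1 := by
      have : 1 < Fintype.card F := Fintype.one_lt_card
      omega
    rw [e1]
    have := e2
    rw [hdom, hker] at this
    have h3 : (Fintype.card F - 1) ^ 3 = (Fintype.card F - 1) ^ 2 * (Fintype.card F - 1) := by
      ring
    rw [h3] at this
    exact Nat.eq_of_mul_eq_mul_right hpos this.symm
  · -- commutativity
    intro a b ha hb
    rw [← hrange] at ha hb
    obtain ⟨v, rfl⟩ := ha
    obtain ⟨w, rfl⟩ := hb
    rw [← _root_.map_mul, ← _root_.map_mul, mul_comm]
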